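/- Let g : ℝ^d → ℝ be continuously differentiable and K-smooth (its gradient is K-Lipschitz), let δ > 0, and fix x ∈ ℝ^d and a coordinate i ∈ {1, …, d}. Then the single-measurement simultaneous-perturbation gradient estimate, averaged uniformly over all sign vectors Δ ∈ {−1, 1}^d, has bias at most Kδd/2: | 2^{−d} Σ_{Δ ∈ {−1,1}^d} g(x + δΔ)/(δ Δ^i) − ∂g/∂x_i(x) | ≤ K δ d / 2. -/

import Mathlib

open intervalIntegral

/-- Second-order Taylor bound for a `C¹` function with `K`-Lipschitz derivative. -/
lemma spsa_taylor_sq_bound {E : Type*} [NormedAddCommGroup E] [NormedSpace ℝ E]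
    (g : E → ℝ) (K : ℝ) (hg : ContDiff ℝ 1 g)
    (hK : ∀ a b : E, ‖fderiv ℝ g a - fderiv ℝ g b‖ ≤ K * ‖a - b‖)
    (x v : E) :
    |g (x + v) - g x - fderiv ℝ g x v| ≤ K / 2 * ‖v‖ ^ 2 := by
  have hdiff := hg.differentiable one_ne_zero
  set φ' : ℝ → ℝ := fun t => fderiv ℝ g (x + t • v) v with hφ'
  have hcont : Continuous φ' := by
    have h1 : Continuous fun t : ℝ => fderiv ℝ g (x + t • v) :=
      (hg.continuous_fderiv one_ne_zero).comp (by continuity)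
    exact h1.clm_apply continuous_const
  have hderiv : ∀ t ∈ Set.uIcc (0:ℝ) 1,
      HasDerivAt (fun t : ℝ => g (x + t • v)) (φ' t) t := by
    intro t _
    have h1 : HasFDerivAt g (fderiv ℝ g (x + t • v)) (x + t • v) :=
      (hdiff _).hasFDerivAt
    have h2 : HasDerivAt (fun t : ℝ => x + t • v) v t := by
      simpa using ((hasDerivAt_id t).smul_const v).const_add x
    exact h1.comp_hasDerivAt t h2
  have hint : IntervalIntegrable φ' MeasureTheory.volume 0 1 :=
    hcont.intervalIntegrable 0 1
  have heq : ∫ t in (0:ℝ)..1, φ' t = g (x + v) - g x := by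
    have := intervalIntegral.integral_eq_sub_of_hasDerivAt hderiv hint
    simpa using this
  have hφ0 : φ' 0 = fderiv ℝ g x v := by simp [hφ']
  have heq2 : g (x + v) - g x - fderiv ℝ g x v
      = ∫ t in (0:ℝ)..1, (φ' t - φ' 0) := by
    rw [intervalIntegral.integral_sub hint intervalIntegrable_const, heq, hφ0]
    simp
  rw [heq2]
  have hbound : ∀ t ∈ Set.Icc (0:ℝ) 1, |φ' t - φ' 0| ≤ (K * ‖v‖ ^ 2) * t := by
    intro t ht
    have hts : φ' t - φ' 0 = (fderiv ℝ g (x + t • v) - fderiv ℝ g (x + (0:ℝ) • v)) v := by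
      simp [hφ']
    rw [hts]
    calc |(fderiv ℝ g (x + t • v) - fderiv ℝ g (x + (0:ℝ) • v)) v|
        ≤ ‖fderiv ℝ g (x + t • v) - fderiv ℝ g (x + (0:ℝ) • v)‖ * ‖v‖ :=
          (fderiv ℝ g (x + t • v) - fderiv ℝ g (x + (0:ℝ) • v)).le_opNorm v
      _ ≤ (K * ‖(x + t • v) - (x + (0:ℝ) • v)‖) * ‖v‖ :=
          mul_le_mul_of_nonneg_right (hK _ _) (norm_nonneg v)
      _ = (K * ‖v‖ ^ 2) * t := by
          have : (x + t • v) - (x + (0:ℝ) • v) = t • v := by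
            simp
          rw [this, norm_smul, Real.norm_eq_abs, abs_of_nonneg ht.1]
          ring
  calc |∫ t in (0:ℝ)..1, (φ' t - φ' 0)|
      ≤ ∫ t in (0:ℝ)..1, |φ' t - φ' 0| := by
        simpa [Real.norm_eq_abs] using
          intervalIntegral.norm_integral_le_integral_norm
            (f := fun t => φ' t - φ' 0) (μ := MeasureTheory.volume) zero_le_one
    _ ≤ ∫ t in (0:ℝ)..1, (K * ‖v‖ ^ 2) * t := by
        apply intervalIntegral.integral_mono_on zero_le_one
        · exact ((hcont.sub continuous_const).abs).intervalIntegrable 0 1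
        · exact (Continuous.intervalIntegrable (by continuity) 0 1)
        · exact hbound
    _ = K / 2 * ‖v‖ ^ 2 := by
        rw [intervalIntegral.integral_const_mul, integral_id]
        ring

/-- The single-measurement simultaneous-perturbation gradient
estimate of a `K`-smooth function, averaged uniformly over all sign vectors
`Δ ∈ {−1, 1}^d`, has bias at most `Kδd/2` in each coordinate. -/
theorem spsa_single_measurement_bias
    {d : ℕ} (g : EuclideanSpace ℝ (Fin d) → ℝ) (K δ : ℝ)
    (hgC1 : ContDiff ℝ 1 g)
    (hsmooth : ∀ a b, ‖gradient g a - gradient g b‖ ≤ K * ‖a - b‖)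
    (hδ : 0 < δ)
    (x : EuclideanSpace ℝ (Fin d)) (i : Fin d) :
    |(2 ^ d : ℝ)⁻¹ *
        (∑ ε : Fin d → Bool,
          g (x + δ • (WithLp.equiv 2 (∀ _ : Fin d, ℝ)).symm
              (fun j => if ε j then (1 : ℝ) else -1)) /
            (δ * (if ε i then (1 : ℝ) else -1))) -
      gradient g x i| ≤ K * δ * d / 2 := by
  classical
  have hδ0 : δ ≠ 0 := hδ.ne'
  set Δ : (Fin d → Bool) → EuclideanSpace ℝ (Fin d) :=
    fun ε => (WithLp.equiv 2 (∀ _ : Fin d, ℝ)).symm (fun j => if ε j then (1:ℝ) else -1)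
    with hΔ
  set σ : (Fin d → Bool) → ℝ := fun ε => if ε i then 1 else -1 with hσdef
  set f' := fderiv ℝ g x with hf'
  -- Lipschitz property of the fderiv
  have hfd : ∀ a b, ‖fderiv ℝ g a - fderiv ℝ g b‖ ≤ K * ‖a - b‖ := by
    intro a b
    have h := hsmooth a b
    rw [gradient, gradient, ← map_sub, LinearIsometryEquiv.norm_map] at h
    exact h
  -- gradient coordinate as fderiv applied to a basis vector
  have hgrad : gradient g x i = f' (EuclideanSpace.single i 1) := by
    have h1 : (inner ℝ (gradient g x) (EuclideanSpace.single i (1:ℝ)) : ℝ)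
        = f' (EuclideanSpace.single i 1) := by
      rw [gradient, hf']
      exact InnerProductSpace.toDual_symm_apply
    rw [EuclideanSpace.inner_single_right] at h1
    simpa using h1
  -- norm of a sign vector
  have hΔnorm : ∀ ε, ‖Δ ε‖ ^ 2 = (d : ℝ) := by
    intro ε
    rw [EuclideanSpace.norm_eq, Real.sq_sqrt (by positivity)]
    have h1 : ∀ j, ‖(Δ ε) j‖ ^ 2 = 1 := by
      intro j
      by_cases h : ε j <;> simp [hΔ, h]
    rw [Finset.sum_congr rfl fun j _ => h1 j]
    simp
  -- Taylor remainder bound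
  have hR : ∀ ε, |g (x + δ • Δ ε) - g x - f' (δ • Δ ε)| ≤ K * δ ^ 2 * d / 2 := by
    intro ε
    have h := spsa_taylor_sq_bound g K hgC1 hfd x (δ • Δ ε)
    have hn : ‖δ • Δ ε‖ ^ 2 = δ ^ 2 * d := by
      rw [norm_smul, mul_pow, hΔnorm, Real.norm_eq_abs, sq_abs]
    rw [hn] at h
    rw [hf']
    linarith
  -- σ facts
  have hσsq : ∀ ε, σ ε * σ ε = 1 := by
    intro ε; by_cases h : ε i <;> simp [hσdef, h]
  -- key pointwise decomposition
  have hterm : ∀ ε, g (x + δ • Δ ε) / (δ * σ ε)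
      = f' (EuclideanSpace.single i 1)
        + (g (x + δ • Δ ε) - g x - f' (δ • Δ ε)) * σ ε / δ
        + (g x / δ + f' (Δ ε) - σ ε * f' (EuclideanSpace.single i 1)) * σ ε := by
    intro ε
    have h1 : f' (δ • Δ ε) = δ * f' (Δ ε) := by simp
    rw [h1]
    by_cases h : ε i
    · simp only [hσdef, h, if_true]
      field_simp
      ring
    · simp only [hσdef, h, Bool.false_eq_true, if_false]
      rw [mul_neg_one, div_neg]
      field_simp
      ring
  -- the "odd" part sums to zero, by the sign-flip involution at coordinate i
  have hΔflip : ∀ ε, Δ (Function.update ε i (!ε i))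
      = Δ ε - (2 * σ ε) • EuclideanSpace.single i 1 := by
    intro ε
    ext j
    by_cases h : j = i
    · subst h
      by_cases h2 : ε j <;>
        simp [hΔ, hσdef, h2, WithLp.equiv_symm_apply, PiLp.toLp_apply, PiLp.sub_apply, PiLp.smul_apply,
          EuclideanSpace.single_apply, Function.update_self] <;> ring
    · by_cases h2 : ε i <;>
        simp [hΔ, hσdef, h, h2, WithLp.equiv_symm_apply, PiLp.toLp_apply, PiLp.sub_apply, PiLp.smul_apply,
          EuclideanSpace.single_apply, Function.update_of_ne h]
  have hσflip : ∀ ε, σ (Function.update ε i (!ε i)) = -σ ε := by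
    intro ε; by_cases h : ε i <;> simp [hσdef, h]
  have hzero : ∑ ε : Fin d → Bool,
      (g x / δ + f' (Δ ε) - σ ε * f' (EuclideanSpace.single i 1)) * σ ε = 0 := by
    apply Finset.sum_involution (fun ε _ => Function.update ε i (!ε i))
    · intro ε _
      rw [hσflip, hΔflip]
      have : f' (Δ ε - (2 * σ ε) • EuclideanSpace.single i 1)
          = f' (Δ ε) - (2 * σ ε) * f' (EuclideanSpace.single i 1) := by simp
      rw [this]
      have := hσsq ε
      nlinarith [hσsq ε]
    · intro ε _ _ hcontra
      have h := congrFun hcontra i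
      by_cases h2 : ε i <;> simp [h2] at h
    · intro ε _
      funext j
      by_cases h : j = i
      · subst h; simp
      · simp [Function.update_of_ne h]
    · intro ε _; exact Finset.mem_univ _
  -- put everything together
  have hsum : (∑ ε : Fin d → Bool, g (x + δ • Δ ε) / (δ * σ ε))
      = (2 ^ d : ℝ) * f' (EuclideanSpace.single i 1)
        + ∑ ε : Fin d → Bool, (g (x + δ • Δ ε) - g x - f' (δ • Δ ε)) * σ ε / δ := by
    calc (∑ ε : Fin d → Bool, g (x + δ • Δ ε) / (δ * σ ε))
        = ∑ ε : Fin d → Bool,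
            (f' (EuclideanSpace.single i 1)
              + (g (x + δ • Δ ε) - g x - f' (δ • Δ ε)) * σ ε / δ
              + (g x / δ + f' (Δ ε) - σ ε * f' (EuclideanSpace.single i 1)) * σ ε) :=
          Finset.sum_congr rfl fun ε _ => hterm ε
      _ = (2 ^ d : ℝ) * f' (EuclideanSpace.single i 1)
          + ∑ ε : Fin d → Bool, (g (x + δ • Δ ε) - g x - f' (δ • Δ ε)) * σ ε / δ := by
          rw [Finset.sum_add_distrib, Finset.sum_add_distrib, hzero, add_zero,
            Finset.sum_const]
          simp [Finset.card_univ, mul_comm]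
  have hcard : ((2:ℝ) ^ d) ≠ 0 := by positivity
  have hmain : (2 ^ d : ℝ)⁻¹ * (∑ ε : Fin d → Bool, g (x + δ • Δ ε) / (δ * σ ε))
      - gradient g x i
      = (2 ^ d : ℝ)⁻¹ *
          ∑ ε : Fin d → Bool, (g (x + δ • Δ ε) - g x - f' (δ • Δ ε)) * σ ε / δ := by
    rw [hsum, hgrad]
    field_simp
    ring
  rw [show (∑ ε : Fin d → Bool,
      g (x + δ • (WithLp.equiv 2 (∀ _ : Fin d, ℝ)).symm
        (fun j => if ε j then (1 : ℝ) else -1)) / (δ * (if ε i then (1 : ℝ) else -1)))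
      = ∑ ε : Fin d → Bool, g (x + δ • Δ ε) / (δ * σ ε) from rfl]
  rw [hmain]
  have habs : ∀ ε : Fin d → Bool,
      |(g (x + δ • Δ ε) - g x - f' (δ • Δ ε)) * σ ε / δ| ≤ K * δ * d / 2 := by
    intro ε
    rw [abs_div, abs_mul]
    have hσabs : |σ ε| = 1 := by by_cases h : ε i <;> simp [hσdef, h]
    rw [hσabs, mul_one, abs_of_pos hδ]
    rw [div_le_iff₀ hδ]
    calc |g (x + δ • Δ ε) - g x - f' (δ • Δ ε)| ≤ K * δ ^ 2 * d / 2 := hR ε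
      _ = K * δ * d / 2 * δ := by ring
  calc |(2 ^ d : ℝ)⁻¹ *
        ∑ ε : Fin d → Bool, (g (x + δ • Δ ε) - g x - f' (δ • Δ ε)) * σ ε / δ|
      ≤ (2 ^ d : ℝ)⁻¹ *
        ∑ ε : Fin d → Bool, |(g (x + δ • Δ ε) - g x - f' (δ • Δ ε)) * σ ε / δ| := by
        rw [abs_mul, abs_of_pos (by positivity : (0:ℝ) < (2 ^ d : ℝ)⁻¹)]
        exact mul_le_mul_of_nonneg_left (Finset.abs_sum_le_sum_abs _ _) (by positivity)
    _ ≤ (2 ^ d : ℝ)⁻¹ * ∑ _ε : Fin d → Bool, (K * δ * d / 2) := by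
        exact mul_le_mul_of_nonneg_left
          (Finset.sum_le_sum fun ε _ => habs ε) (by positivity)
    _ = K * δ * d / 2 := by
        rw [Finset.sum_const, Finset.card_univ]
        simp [Fintype.card_fun]
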